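/- Weak maximum principle for functions of grade at least 1: let f : ℝⁿ → ℝ (n ≥ 1) be twice continuously differentiable, let Q ⊆ ℝⁿ be open, and suppose that for every x ∈ Q there exists a nonzero vector h ∈ ℝⁿ with ⟨∇²f(x)h, h⟩ ≥ 0 (i.e., f is non-convex of grade 1 on Q). Then for every nonempty compact set K ⊆ Q, the maximum of f over K is attained on the topological boundary of K: max_{x ∈ K} f(x) = max_{x ∈ ∂K} f(x). -/

import Mathlib

/-!
For `ε > 0` the perturbation `g = f + ε ‖·‖²` has Hessian form `D²f x (h, h) + 2ε ‖h‖²`, which is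
strictly positive in the direction `h` supplied by the grade condition; by the second-order
necessary condition along the line `t ↦ x + t • h`, `g` has no local maximum in the interior of `K`.
Hence `g` attains its maximum over `K` on `∂K`, so `f ≤ max_{∂K} f + ε R²` on `K ⊆ closedBall 0 R`,
and letting `ε → 0` gives the claim.
-/

open Set Filter Topology

theorem IsCompact.exists_mem_frontier_isMaxOn {X α : Type*} [TopologicalSpace X]
    [TopologicalSpace α] [LinearOrder α] [ClosedIciTopology α] {K : Set X} (hK : IsCompact K)
    (hne : K.Nonempty) {g : X → α} (hg : ContinuousOn g K)
    (hno : ∀ x ∈ interior K, ¬IsLocalMax g x) : ∃ x ∈ frontier K, IsMaxOn g K x := by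
  obtain ⟨x, hxK, hmax⟩ := hK.exists_isMaxOn hne hg
  refine ⟨x, ⟨subset_closure hxK, fun hint ↦ hno x hint ?_⟩, hmax⟩
  exact hmax.isLocalMax (mem_interior_iff_mem_nhds.mp hint)

theorem IsLocalMax.deriv_deriv_nonpos {φ : ℝ → ℝ} {a : ℝ} (hmax : IsLocalMax φ a)
    (hc : ContinuousAt φ a) : deriv (deriv φ) a ≤ 0 := by
  by_contra! hpos
  -- the second-derivative test makes `a` a local minimum as well, so `φ` is locally constant
  have hmin := isLocalMin_of_deriv_deriv_pos hpos hmax.deriv_eq_zero hc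
  have hconst : φ =ᶠ[𝓝 a] fun _ ↦ φ a :=
    (hmin.and hmax).mono fun _ h ↦ le_antisymm h.2 h.1
  simp [hconst.deriv.deriv_eq] at hpos

section

variable {E F : Type*} [NormedAddCommGroup E] [NormedSpace ℝ E]
  [NormedAddCommGroup F] [NormedSpace ℝ F]

theorem ContDiff.deriv_deriv_comp_add_smul {g : E → F} (hg : ContDiff ℝ 2 g) (x h : E) :
    deriv (deriv fun t : ℝ ↦ g (x + t • h)) 0 = iteratedFDeriv ℝ 2 g x ![h, h] := by
  have hline (t : ℝ) : HasDerivAt (fun t : ℝ ↦ x + t • h) h t := by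
    simpa using ((hasDerivAt_id t).smul_const h).const_add x
  have hderiv : deriv (fun t : ℝ ↦ g (x + t • h)) = fun t ↦ fderiv ℝ g (x + t • h) h :=
    funext fun t ↦ ((hg.differentiable two_ne_zero _).hasFDerivAt.comp_hasDerivAt t
      (hline t)).deriv
  have hg' : HasFDerivAt (fderiv ℝ g) (fderiv ℝ (fderiv ℝ g) x) (x + (0 : ℝ) • h) := by
    rw [zero_smul, add_zero]
    exact ((hg.fderiv_right le_rfl).differentiable one_ne_zero x).hasFDerivAt
  rw [hderiv, iteratedFDeriv_two_apply]
  have h1 : HasDerivAt (fun t : ℝ ↦ fderiv ℝ g (x + t • h)) (fderiv ℝ (fderiv ℝ g) x h) 0 :=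
    hg'.comp_hasDerivAt (0 : ℝ) (hline 0)
  have h2 := h1.clm_apply (hasDerivAt_const (0 : ℝ) h)
  rw [map_zero, add_zero] at h2
  simpa using h2.deriv

theorem IsLocalMax.iteratedFDeriv_two_nonpos {g : E → ℝ} {x : E} (hmax : IsLocalMax g x)
    (hg : ContDiff ℝ 2 g) (h : E) : iteratedFDeriv ℝ 2 g x ![h, h] ≤ 0 := by
  rw [← hg.deriv_deriv_comp_add_smul]
  have hline : Continuous fun t : ℝ ↦ x + t • h := by fun_prop
  refine IsLocalMax.deriv_deriv_nonpos ?_ (hg.continuous.comp hline).continuousAt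
  exact IsLocalMax.comp_continuous (by simpa using hmax) hline.continuousAt

end

section

variable {E : Type*} [NormedAddCommGroup E] [InnerProductSpace ℝ E]

theorem iteratedFDeriv_two_norm_sq (x h : E) :
    iteratedFDeriv ℝ 2 (fun y : E ↦ ‖y‖ ^ 2) x ![h, h] = 2 * ‖h‖ ^ 2 := by
  have hfd : fderiv ℝ (fun y : E ↦ ‖y‖ ^ 2) = (2 • innerSL ℝ : E →L[ℝ] E →L[ℝ] ℝ) :=
    funext fun y ↦ (hasStrictFDerivAt_norm_sq y).hasFDerivAt.fderiv
  rw [iteratedFDeriv_two_apply, hfd, ContinuousLinearMap.fderiv]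
  simp only [Matrix.cons_val_zero, Matrix.cons_val_one, Matrix.cons_val_fin_one, smul_apply,
    nsmul_eq_mul, Nat.cast_ofNat]
  exact congrArg (2 * ·) (real_inner_self_eq_norm_sq h)

theorem iteratedFDeriv_two_add_mul_norm_sq {f : E → ℝ} (hf : ContDiff ℝ 2 f) (ε : ℝ)
    (x h : E) :
    iteratedFDeriv ℝ 2 (fun y ↦ f y + ε * ‖y‖ ^ 2) x ![h, h] =
      iteratedFDeriv ℝ 2 f x ![h, h] + 2 * ε * ‖h‖ ^ 2 := by
  have hsq : ContDiff ℝ 2 fun y : E ↦ ‖y‖ ^ 2 := contDiff_norm_sq ℝ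
  have hg : (fun y ↦ f y + ε * ‖y‖ ^ 2) = f + ε • fun y : E ↦ ‖y‖ ^ 2 := rfl
  rw [hg, iteratedFDeriv_add_apply (g := ε • fun y : E ↦ ‖y‖ ^ 2) hf.contDiffAt
      (hsq.const_smul ε).contDiffAt, iteratedFDeriv_const_smul_apply hsq.contDiffAt,
    add_apply, smul_apply, iteratedFDeriv_two_norm_sq, smul_eq_mul]
  ring

theorem not_isLocalMax_add_mul_norm_sq {f : E → ℝ} (hf : ContDiff ℝ 2 f) {ε : ℝ} (hε : 0 < ε)
    {x h : E} (hh : h ≠ 0) (hfh : 0 ≤ iteratedFDeriv ℝ 2 f x ![h, h]) :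
    ¬IsLocalMax (fun y ↦ f y + ε * ‖y‖ ^ 2) x := by
  intro hmax
  have hnonpos := hmax.iteratedFDeriv_two_nonpos
    (hf.add (contDiff_const.mul (contDiff_norm_sq ℝ))) h
  rw [iteratedFDeriv_two_add_mul_norm_sq hf] at hnonpos
  have : 0 < 2 * ε * ‖h‖ ^ 2 := by positivity
  linarith

variable {f : E → ℝ} {K : Set E}

theorem exists_mem_frontier_isMaxOn_add_mul_norm_sq (hf : ContDiff ℝ 2 f) (hK : IsCompact K)
    (hne : K.Nonempty)
    (hgrade : ∀ x ∈ interior K, ∃ h : E, h ≠ 0 ∧ 0 ≤ iteratedFDeriv ℝ 2 f x ![h, h])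
    {ε : ℝ} (hε : 0 < ε) : ∃ x ∈ frontier K, IsMaxOn (fun y ↦ f y + ε * ‖y‖ ^ 2) K x := by
  refine hK.exists_mem_frontier_isMaxOn hne
    (hf.continuous.add (by fun_prop)).continuousOn fun x hx ↦ ?_
  obtain ⟨h, hh, hfh⟩ := hgrade x hx
  exact not_isLocalMax_add_mul_norm_sq hf hε hh hfh

theorem apply_le_sSup_image_frontier (hf : ContDiff ℝ 2 f) (hK : IsCompact K)
    (hgrade : ∀ x ∈ interior K, ∃ h : E, h ≠ 0 ∧ 0 ≤ iteratedFDeriv ℝ 2 f x ![h, h])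
    {y : E} (hy : y ∈ K) : f y ≤ sSup (f '' frontier K) := by
  obtain ⟨R, hR⟩ := isBounded_iff_forall_norm_le.mp hK.isBounded
  have hbdd : BddAbove (f '' frontier K) :=
    (hK.image hf.continuous).bddAbove.mono (image_mono hK.isClosed.frontier_subset)
  refine le_of_forall_pos_le_add fun δ hδ ↦ ?_
  set ε := δ / (R ^ 2 + 1)
  have hε : 0 < ε := by positivity
  obtain ⟨x, hxK, hmax⟩ :=
    exists_mem_frontier_isMaxOn_add_mul_norm_sq hf hK ⟨y, hy⟩ hgrade hε
  have hx : ‖x‖ ^ 2 ≤ R ^ 2 :=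
    pow_le_pow_left₀ (norm_nonneg x) (hR x (hK.isClosed.frontier_subset hxK)) 2
  have hεR : ε * R ^ 2 ≤ δ := by
    rw [div_mul_eq_mul_div, div_le_iff₀ (by positivity)]
    nlinarith
  calc f y ≤ f y + ε * ‖y‖ ^ 2 := le_add_of_nonneg_right (by positivity)
    _ ≤ f x + ε * ‖x‖ ^ 2 := hmax hy
    _ ≤ sSup (f '' frontier K) + ε * R ^ 2 := by
      gcongr
      exact le_csSup hbdd (mem_image_of_mem f hxK)
    _ ≤ sSup (f '' frontier K) + δ := by gcongr

end

theorem weak_maximum_principle {n : ℕ}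
    (f : EuclideanSpace ℝ (Fin n) → ℝ) (hf : ContDiff ℝ 2 f)
    (Q : Set (EuclideanSpace ℝ (Fin n)))
    (hgrade : ∀ x ∈ Q, ∃ h : EuclideanSpace ℝ (Fin n),
      h ≠ 0 ∧ 0 ≤ iteratedFDeriv ℝ 2 f x ![h, h])
    (K : Set (EuclideanSpace ℝ (Fin n))) (hK : IsCompact K) (hKne : K.Nonempty)
    (hKQ : K ⊆ Q) :
    sSup (f '' K) = sSup (f '' frontier K) := by
  have hgradeK : ∀ x ∈ interior K, ∃ h, h ≠ 0 ∧ 0 ≤ iteratedFDeriv ℝ 2 f x ![h, h] :=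
    fun x hx ↦ hgrade x (hKQ (interior_subset hx))
  have hfrontier : frontier K ⊆ K := hK.isClosed.frontier_subset
  obtain ⟨x, hx, -⟩ :=
    exists_mem_frontier_isMaxOn_add_mul_norm_sq hf hK hKne hgradeK one_pos
  refine le_antisymm (csSup_le (hKne.image f) ?_) <|
    csSup_le_csSup (hK.image hf.continuous).bddAbove ⟨f x, mem_image_of_mem f hx⟩
      (image_mono hfrontier)
  rintro _ ⟨y, hy, rfl⟩
  exact apply_le_sSup_image_frontier hf hK hgradeK hy
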